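/- Let k = 2^s and let B ⊆ [k] with 0 < |B| = ℓ ≤ k/2, and suppose B has exactly m boundary points, i.e. m = #{b ∈ [k-1] : exactly one of b, b+1 is in B}. Identify [k] with {0,1}^s via binary expansion and let ∂̃(B) be the edge-boundary of the corresponding subset of the hypercube. Then |∂̃(B)| ≤ 6 ℓ log₂(mk/ℓ). -/

import Mathlib

/-- The edge-boundary, in the hypercube `{0,1}^s` (identified with `[k]`, `k = 2^s`, via
binary expansion), of `B ⊆ [k]`: each hypercube edge counted once, from its endpoint whose
`i`-th digit is `0`. -/
def cubeBoundary (k s : ℕ) (B : Finset ℕ) : ℕ :=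
  (((Finset.Icc 1 k ×ˢ Finset.Icc 1 s)).filter
    (fun p => (p.1 - 1).testBit (p.2 - 1) = false ∧
      ((p.1 ∈ B) ≠ (p.1 + 2 ^ (p.2 - 1) ∈ B)))).card

/-!
In direction `i`, the boundary edges `{x, x + 2^i}` number at most `ℓ`, since each has an
endpoint in `B`, and at most `m * 2^i`, since each straddles a boundary point `y` of `B` on the
line (`x ≤ y < x + 2^i`) and each `y` is straddled by at most `2^i` such edges. If `r` is least
with `ℓ ≤ m * 2^r`, the directions below `r` contribute a geometric sum below `2ℓ` and the
other `s - r` at most `ℓ` each, where `2^(s-r) ≤ mk/ℓ`. As `mk/ℓ ≥ 2`, the total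
`2ℓ + (s - r)ℓ` is at most `3ℓ log₂(mk/ℓ)`.
-/

open Finset

-- The direction `i` is `0`-based: it is the digit index `p.2 - 1` of `cubeBoundary`.
def cubeBoundaryDir (k : ℕ) (B : Finset ℕ) (i : ℕ) : Finset ℕ :=
  (Icc 1 k).filter fun x => (x - 1).testBit i = false ∧ ((x ∈ B) ≠ (x + 2 ^ i ∈ B))

def lineBoundary (k : ℕ) (B : Finset ℕ) : Finset ℕ :=
  (Icc 1 (k - 1)).filter fun y => (y ∈ B) ≠ (y + 1 ∈ B)

lemma cubeBoundary_eq_sum_card_cubeBoundaryDir (k s : ℕ) (B : Finset ℕ) :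
    cubeBoundary k s B = ∑ i ∈ range s, (cubeBoundaryDir k B i).card := by
  rw [cubeBoundary, card_filter, sum_product, sum_comm, ← Ico_add_one_right_eq_Icc, range_eq_Ico,
    ← sum_Ico_add' _ 0 s 1]
  simp only [cubeBoundaryDir, card_filter, Nat.add_sub_cancel]

lemma Nat.add_two_pow_lt_two_pow {a i s : ℕ} (ha : a < 2 ^ s) (hi : i < s)
    (hbit : a.testBit i = false) : a + 2 ^ i < 2 ^ s := by
  have hsplit : 2 ^ s = 2 ^ (s - i) * 2 ^ i := by rw [← pow_add, Nat.sub_add_cancel hi.le]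
  have hq : a / 2 ^ i < 2 ^ (s - i) := Nat.div_lt_of_lt_mul (by rwa [mul_comm, ← hsplit])
  have hq_even : a / 2 ^ i % 2 = 0 := by
    simpa [Nat.testBit_eq_decide_div_mod_eq] using hbit
  have hpow_even : 2 ^ (s - i) % 2 = 0 := Nat.two_pow_mod_two_eq_zero.2 (by omega)
  rw [hsplit, ← Nat.div_lt_iff_lt_mul (by positivity), Nat.add_div_right _ (by positivity)]
  omega

lemma exists_mem_ne_mem_add_one_between {B : Finset ℕ} {a b : ℕ} (hab : a ≤ b)
    (h : (a ∈ B) ≠ (b ∈ B)) : ∃ y, a ≤ y ∧ y < b ∧ ((y ∈ B) ≠ (y + 1 ∈ B)) := by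
  induction b, hab using Nat.le_induction with
  | base => exact absurd rfl h
  | succ b hab ih =>
    by_cases hb : (a ∈ B) = (b ∈ B)
    · exact ⟨b, hab, b.lt_succ_self, hb ▸ h⟩
    · obtain ⟨y, hay, hyb, hy⟩ := ih hb
      exact ⟨y, hay, hyb.trans b.lt_succ_self, hy⟩

lemma card_cubeBoundaryDir_le_card (k : ℕ) (B : Finset ℕ) (i : ℕ) :
    (cubeBoundaryDir k B i).card ≤ B.card := by
  set f : ℕ → ℕ := fun x => if x ∈ B then x else x + 2 ^ i
  have bit_f : ∀ x ∈ cubeBoundaryDir k B i, (f x - 1).testBit i = decide (x ∉ B) := by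
    intro x hx
    simp only [cubeBoundaryDir, mem_filter, mem_Icc] at hx
    by_cases hxB : x ∈ B
    · simp [f, hxB, hx.2.1]
    · have : x + 2 ^ i - 1 = 2 ^ i + (x - 1) := by
        have := hx.1.1; have := Nat.two_pow_pos i; omega
      simp [f, hxB, this, Nat.testBit_two_pow_add_eq, hx.2.1]
  refine card_le_card_of_injOn f (fun x hx => ?_) (fun x hx y hy hxy => ?_)
  · simp only [cubeBoundaryDir, coe_filter, Set.mem_ofPred_eq] at hx
    by_cases hxB : x ∈ B
    · simp [f, hxB]
    · simpa [f, hxB] using hx.2.2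
  · have hxy_B : x ∈ B ↔ y ∈ B := by
      simpa [bit_f x hx, bit_f y hy] using congrArg (fun z => (z - 1).testBit i) hxy
    by_cases hxB : x ∈ B
    · simpa [f, hxB, hxy_B.1 hxB] using hxy
    · simpa [f, hxB, mt hxy_B.2 hxB] using hxy

lemma card_cubeBoundaryDir_le_mul (s : ℕ) (B : Finset ℕ) {i : ℕ} (hi : i < s) :
    (cubeBoundaryDir (2 ^ s) B i).card ≤ (lineBoundary (2 ^ s) B).card * 2 ^ i := by
  calc (cubeBoundaryDir (2 ^ s) B i).card
      ≤ ((lineBoundary (2 ^ s) B).biUnion fun y => Ioc (y - 2 ^ i) y).card := by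
        refine card_le_card fun x hx => ?_
        simp only [cubeBoundaryDir, mem_filter, mem_Icc] at hx
        obtain ⟨⟨hx1, hxk⟩, hbit, hne⟩ := hx
        have hxd := Nat.add_two_pow_lt_two_pow (a := x - 1) (by omega) hi hbit
        obtain ⟨y, hxy, hyx, hy⟩ :=
          exists_mem_ne_mem_add_one_between (Nat.le_add_right x (2 ^ i)) hne
        exact mem_biUnion.2
          ⟨y, mem_filter.2 ⟨mem_Icc.2 ⟨by omega, by omega⟩, hy⟩, mem_Ioc.2 ⟨by omega, hxy⟩⟩
    _ ≤ _ := card_biUnion_le_card_mul _ _ _ fun y _ => by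
      simpa only [Nat.card_Ioc] using tsub_tsub_le

lemma lineBoundary_nonempty {k : ℕ} {B : Finset ℕ} (hB : B ⊆ Icc 1 k) (hne : B.Nonempty)
    (hlt : B.card < k) : (lineBoundary k B).Nonempty := by
  obtain ⟨a, ha⟩ := hne
  obtain ⟨c, hc, hcB⟩ := exists_mem_notMem_of_card_lt_card (t := Icc 1 k) (by simpa using hlt)
  have haI := mem_Icc.1 (hB ha)
  rw [mem_Icc] at hc
  have hac : (a ∈ B) ≠ (c ∈ B) := by simp [ha, hcB]
  rcases le_total a c with h | h
  · obtain ⟨y, h1, h2, hy⟩ := exists_mem_ne_mem_add_one_between h hac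
    exact ⟨y, mem_filter.2 ⟨mem_Icc.2 ⟨by omega, by omega⟩, hy⟩⟩
  · obtain ⟨y, h1, h2, hy⟩ := exists_mem_ne_mem_add_one_between h hac.symm
    exact ⟨y, mem_filter.2 ⟨mem_Icc.2 ⟨by omega, by omega⟩, hy⟩⟩

lemma natCast_le_logb_two_div {n : ℕ} {a x : ℝ} (ha : 0 < a) (h : 2 ^ n * a ≤ x) :
    (n : ℝ) ≤ Real.logb 2 (x / a) := by
  rw [Real.le_logb_iff_rpow_le one_lt_two (div_pos ((by positivity : (0 : ℝ) < _).trans_le h) ha),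
    Real.rpow_natCast, le_div_iff₀ ha]
  exact h

lemma sum_range_min_two_pow_le {ℓ m r s : ℕ} (hrs : r ≤ s) (hr : ∀ i < r, m * 2 ^ i < ℓ) :
    ∑ i ∈ range s, min ℓ (m * 2 ^ i) ≤ 2 * ℓ + (s - r) * ℓ := by
  rw [← sum_range_add_sum_Ico _ hrs]
  gcongr
  · calc ∑ i ∈ range r, min ℓ (m * 2 ^ i) ≤ m * ∑ i ∈ range r, 2 ^ i := by
          rw [mul_sum]; exact sum_le_sum fun _ _ => min_le_right _ _
      _ ≤ 2 * ℓ := by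
          rcases r with _ | r
          · simp
          have hgeom := Nat.geomSum_lt le_rfl (s := range (r + 1)) (fun _ => mem_range.1)
          have := hr r r.lt_succ_self
          calc m * ∑ i ∈ range (r + 1), 2 ^ i ≤ m * 2 ^ (r + 1) := by gcongr
            _ = 2 * (m * 2 ^ r) := by ring
            _ ≤ 2 * ℓ := by omega
  · calc ∑ i ∈ Ico r s, min ℓ (m * 2 ^ i) ≤ ∑ _i ∈ Ico r s, ℓ :=
          sum_le_sum fun _ _ => min_le_left _ _
      _ = (s - r) * ℓ := by simp

lemma cubeBoundary_le (s : ℕ) (B : Finset ℕ) {r : ℕ} (hrs : r ≤ s)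
    (hr : ∀ i < r, (lineBoundary (2 ^ s) B).card * 2 ^ i < B.card) :
    cubeBoundary (2 ^ s) s B ≤ 2 * B.card + (s - r) * B.card :=
  calc cubeBoundary (2 ^ s) s B = ∑ i ∈ range s, (cubeBoundaryDir (2 ^ s) B i).card :=
        cubeBoundary_eq_sum_card_cubeBoundaryDir _ _ _
    _ ≤ ∑ i ∈ range s, min B.card ((lineBoundary (2 ^ s) B).card * 2 ^ i) :=
        sum_le_sum fun _ hi => le_min (card_cubeBoundaryDir_le_card _ _ _)
          (card_cubeBoundaryDir_le_mul s B (mem_range.1 hi))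
    _ ≤ 2 * B.card + (s - r) * B.card := sum_range_min_two_pow_le hrs hr

theorem stmt4_general (s k : ℕ) (hk : k = 2 ^ s)
    (B : Finset ℕ) (hB : B ⊆ Finset.Icc 1 k) (ℓ m : ℕ)
    (hℓ : B.card = ℓ) (hpos : 0 < ℓ) (hhalf : ℓ ≤ k / 2)
    (hm : ((Finset.Icc 1 (k - 1)).filter (fun y => (y ∈ B) ≠ (y + 1 ∈ B))).card = m) :
    (cubeBoundary k s B : ℝ) ≤ 6 * ℓ * Real.logb 2 (((m : ℝ) * k) / ℓ) := by
  have h2ℓ : 2 * ℓ ≤ k := (Nat.mul_le_mul_left 2 hhalf).trans (Nat.mul_div_le k 2)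
  have hm_pos : 0 < m :=
    hm ▸ card_pos.2 (lineBoundary_nonempty hB (card_pos.1 (hℓ ▸ hpos)) (by omega))
  have hk_le : k ≤ m * k := Nat.le_mul_of_pos_left k hm_pos
  have hex : ∃ r, ℓ ≤ m * 2 ^ r := ⟨s, hk ▸ (by omega)⟩
  set r := Nat.find hex
  have hrs : r ≤ s := Nat.find_min' hex (hk ▸ (by omega))
  have hcount : cubeBoundary k s B ≤ 2 * ℓ + (s - r) * ℓ := by
    subst hk hℓ hm
    exact cubeBoundary_le s B hrs fun i hi => not_le.1 (Nat.find_min hex hi)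
  have hℓ_pos : (0 : ℝ) < ℓ := by exact_mod_cast hpos
  have hlog_one : (1 : ℝ) ≤ Real.logb 2 (((m : ℝ) * k) / ℓ) := by
    simpa using natCast_le_logb_two_div (n := 1) hℓ_pos (by exact_mod_cast h2ℓ.trans hk_le)
  have hlog_count : ((s - r : ℕ) : ℝ) ≤ Real.logb 2 (((m : ℝ) * k) / ℓ) := by
    refine natCast_le_logb_two_div hℓ_pos ?_
    have : 2 ^ (s - r) * ℓ ≤ m * k :=
      calc 2 ^ (s - r) * ℓ ≤ 2 ^ (s - r) * (m * 2 ^ r) := by gcongr; exact Nat.find_spec hex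
        _ = m * k := by rw [hk, mul_left_comm, ← pow_add, Nat.sub_add_cancel hrs]
    exact_mod_cast this
  have hcount_real : (cubeBoundary k s B : ℝ) ≤ 2 * ℓ + (s - r : ℕ) * ℓ := by
    exact_mod_cast hcount
  nlinarith

/-- For `k = 2^s` and `B ⊆ [k]` with `0 < |B| = ℓ ≤ k/2` and exactly `m`
boundary points in `[k-1]`, the hypercube edge-boundary satisfies
`|∂̃ B| ≤ 6 ℓ log₂(mk/ℓ)`. -/
theorem stmt4 (s k : ℕ) (hs : 0 < s) (hk : k = 2 ^ s)
    (B : Finset ℕ) (hB : B ⊆ Finset.Icc 1 k) (ℓ m : ℕ)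
    (hℓ : B.card = ℓ) (hpos : 0 < ℓ) (hhalf : ℓ ≤ k / 2)
    (hm : ((Finset.Icc 1 (k - 1)).filter (fun y => (y ∈ B) ≠ (y + 1 ∈ B))).card = m) :
    (cubeBoundary k s B : ℝ) ≤ 6 * ℓ * Real.logb 2 (((m : ℝ) * k) / ℓ) :=
  stmt4_general s k hk B hB ℓ m hℓ hpos hhalf hm
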